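/- For every n ≥ 0, the left-nested self-application Oₗ^{n+1} of the combinator O = λx.λy. y (x y) is βη-equal to λx. xⁿ (λy. y (x y)); hence O does not have the ρ-property. -/

import Mathlib

/-!
`O (λx. xⁿ W)` with `W = λy. y (x y)` β-reduces to `Oⁿ (λy. y (O y))`; there `O y` reduces
to `W` under the binder, and every further `O` puts one more `x` in front. So `Oₗ^{n+1}` is
convertible to `λx. xⁿ W`. These terms are βη-normal and pairwise distinct, hence pairwise
inconvertible by the Church–Rosser theorem for βη, proved by Takahashi's method: parallel
βη-reduction has the triangle property with respect to a complete development.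
-/

/-- Untyped lambda terms in de Bruijn representation. -/
inductive Lam : Type
  | var : Nat → Lam
  | app : Lam → Lam → Lam
  | lam : Lam → Lam
  deriving DecidableEq

namespace Lam

/-- Shift free variables `≥ d` up by one. -/
def lift (d : Nat) : Lam → Lam
  | var n => var (if n < d then n else n + 1)
  | app a b => app (lift d a) (lift d b)
  | lam a => lam (lift (d + 1) a)

/-- Substitute `s` for variable `d` (and lower the variables above `d`). -/
def subst (d : Nat) (s : Lam) : Lam → Lam
  | var n => if n = d then s else if d < n then var (n - 1) else var n
  | app a b => app (subst d s a) (subst d s b)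
  | lam a => lam (subst (d + 1) (lift 0 s) a)

/-- βη-equivalence of lambda terms. -/
inductive BetaEta : Lam → Lam → Prop
  | beta (t s : Lam) : BetaEta (app (lam t) s) (subst 0 s t)
  | eta (t : Lam) : BetaEta (lam (app (lift 0 t) (var 0))) t
  | refl (t : Lam) : BetaEta t t
  | symm {t s : Lam} : BetaEta t s → BetaEta s t
  | trans {t s u : Lam} : BetaEta t s → BetaEta s u → BetaEta t u
  | congApp {t t' s s' : Lam} : BetaEta t t' → BetaEta s s' →
      BetaEta (app t s) (app t' s')
  | congLam {t t' : Lam} : BetaEta t t' → BetaEta (lam t) (lam t')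

/-- The B combinator `λf.λg.λx. f (g x)`. -/
def B : Lam := lam (lam (lam (app (var 2) (app (var 1) (var 0)))))

/-- Left-nested self-application `X X ... X` with `k` copies (for `k ≥ 1`). -/
def sapp (X : Lam) : Nat → Lam
  | 0 => X
  | 1 => X
  | k + 2 => app (sapp X (k + 1)) X

end Lam

namespace Lam

/-- O = λx.λy. y (x y) -/
def O : Lam := lam (lam (app (var 0) (app (var 1) (var 0))))

/-- n-fold application: npow e n a = e (e (... (e a))) -/
def npow (e : Lam) : Nat → Lam → Lam
  | 0, a => a
  | n + 1, a => app e (npow e n a)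

theorem lift_lift {i j : Nat} (h : i ≤ j) (t : Lam) :
    lift i (lift j t) = lift (j + 1) (lift i t) := by
  induction t generalizing i j with
  | var n => grind [lift]
  | app a b iha ihb => simp only [lift, iha h, ihb h]
  | lam a iha => simp only [lift, iha (Nat.succ_le_succ h)]

theorem subst_lift (d : Nat) (s t : Lam) : subst d s (lift d t) = t := by
  induction t generalizing d s with
  | var n => grind [lift, subst]
  | app a b iha ihb => simp only [lift, subst, iha, ihb]
  | lam a iha => simp only [lift, subst, iha]

theorem lift_injective (d : Nat) : Function.Injective (lift d) :=
  Function.LeftInverse.injective (subst_lift d (var 0))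

theorem subst_var_lift_succ (d : Nat) (t : Lam) : subst d (var d) (lift (d + 1) t) = t := by
  induction t generalizing d with
  | var n => grind [lift, subst]
  | app a b iha ihb => simp only [lift, subst, iha, ihb]
  | lam a iha => grind [lift, subst]

theorem lift_subst_of_le {j d : Nat} (h : j ≤ d) (s t : Lam) :
    lift d (subst j s t) = subst j (lift d s) (lift (d + 1) t) := by
  induction t generalizing j d s with
  | var n => grind [lift, subst]
  | app a b iha ihb => simp only [lift, subst, iha h, ihb h]
  | lam a iha =>
    simp only [lift, subst, iha (Nat.succ_le_succ h), lift_lift (Nat.zero_le d)]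

theorem lift_subst_of_ge {e j : Nat} (h : e ≤ j) (s t : Lam) :
    lift e (subst j s t) = subst (j + 1) (lift e s) (lift e t) := by
  induction t generalizing e j s with
  | var n => grind [lift, subst]
  | app a b iha ihb => simp only [lift, subst, iha h, ihb h]
  | lam a iha =>
    simp only [lift, subst, iha (Nat.succ_le_succ h), lift_lift (Nat.zero_le e)]

theorem subst_subst {j d : Nat} (h : j ≤ d) (s a t : Lam) :
    subst d s (subst j a t) = subst j (subst d s a) (subst (d + 1) (lift j s) t) := by
  induction t generalizing j d s a with
  | var n => grind [subst, subst_lift]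
  | app x y ihx ihy => simp only [subst, ihx h, ihy h]
  | lam x ihx =>
    simp only [subst, ihx (Nat.succ_le_succ h), lift_subst_of_ge (Nat.zero_le d),
      lift_lift (Nat.zero_le j)]

theorem eq_var_zero_of_lift_eq {d : Nat} {t : Lam} (h : lift d t = var 0) : t = var 0 := by
  cases t <;> grind [lift]

theorem exists_eq_lift_of_lift_succ_eq_lift {i j : Nat} (h : i ≤ j) {f u : Lam}
    (hfu : lift (j + 1) f = lift i u) : ∃ g, f = lift i g ∧ u = lift j g := by
  induction f generalizing i j u with
  | var n =>
    cases u <;> simp only [lift, var.injEq, reduceCtorEq] at hfu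
    exact ⟨var (if n < i then n else n - 1), by grind [lift], by grind [lift]⟩
  | app a b iha ihb =>
    cases u <;> simp only [lift, app.injEq, reduceCtorEq] at hfu
    obtain ⟨ga, rfl, rfl⟩ := iha h hfu.1
    obtain ⟨gb, rfl, rfl⟩ := ihb h hfu.2
    exact ⟨app ga gb, rfl, rfl⟩
  | lam a iha =>
    cases u <;> simp only [lift, lam.injEq, reduceCtorEq] at hfu
    obtain ⟨g, rfl, rfl⟩ := iha (Nat.succ_le_succ h) hfu
    exact ⟨lam g, rfl, rfl⟩

theorem exists_eta_of_lift_succ_eq_eta {d : Nat} {b u : Lam}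
    (h : lift (d + 1) b = app (lift 0 u) (var 0)) :
    ∃ g, b = app (lift 0 g) (var 0) ∧ u = lift d g := by
  cases b <;> simp only [lift, app.injEq, reduceCtorEq] at h
  obtain ⟨g, rfl, rfl⟩ := exists_eq_lift_of_lift_succ_eq_lift (Nat.zero_le d) h.1
  exact ⟨g, by rw [eq_var_zero_of_lift_eq h.2], rfl⟩

theorem lift_ne_lam {f : Lam} (hf : ∀ b, f ≠ lam b) (d : Nat) : ∀ b, lift d f ≠ lam b := by
  intro b h
  cases f <;> simp_all [lift]

inductive Par : Lam → Lam → Prop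
  | var (n : Nat) : Par (var n) (var n)
  | app {t t' s s' : Lam} : Par t t' → Par s s' → Par (app t s) (app t' s')
  | lam {t t' : Lam} : Par t t' → Par (lam t) (lam t')
  | beta {t t' s s' : Lam} : Par t t' → Par s s' → Par (app (lam t) s) (subst 0 s' t')
  | eta {t t' : Lam} : Par t t' → Par (lam (app (lift 0 t) (var 0))) t'

namespace Par

protected theorem refl : ∀ t, Par t t
  | .var n => .var n
  | .app a b => .app (Par.refl a) (Par.refl b)
  | .lam a => .lam (Par.refl a)

protected theorem lift {t t' : Lam} (h : Par t t') (d : Nat) : Par (lift d t) (lift d t') := by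
  induction h generalizing d with
  | var n => exact Par.refl _
  | app _ _ ihf iha => exact .app (ihf d) (iha d)
  | lam _ ihb => exact .lam (ihb (d + 1))
  | beta _ _ ihb iha =>
    rw [lift, lift, lift_subst_of_le (Nat.zero_le d)]
    exact .beta (ihb (d + 1)) (iha d)
  | eta _ ihu =>
    have := Par.eta (ihu d)
    rwa [lift_lift (Nat.zero_le d)] at this

protected theorem subst {t t' : Lam} (h : Par t t') {s s' : Lam} (hs : Par s s') (d : Nat) :
    Par (subst d s t) (subst d s' t') := by
  induction h generalizing d s s' with
  | var n => simp only [Lam.subst]; split_ifs <;> first | exact hs | exact Par.refl _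
  | app _ _ ihf iha => exact .app (ihf hs d) (iha hs d)
  | lam _ ihb => exact .lam (ihb (hs.lift 0) (d + 1))
  | beta _ _ ihb iha =>
    rw [Lam.subst, Lam.subst, subst_subst (Nat.zero_le d)]
    exact .beta (ihb (hs.lift 0) (d + 1)) (iha hs d)
  | eta _ ihu =>
    have := Par.eta (ihu hs d)
    rwa [lift_subst_of_ge (Nat.zero_le d)] at this

theorem of_lift {a s : Lam} (h : Par a s) {t : Lam} {d : Nat} (ht : a = lift d t) :
    ∃ t', s = lift d t' ∧ Par t t' := by
  induction h generalizing t d with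
  | var n => exact ⟨t, ht, Par.refl t⟩
  | app _ _ ihf iha =>
    cases t <;> simp only [Lam.lift, app.injEq, reduceCtorEq] at ht
    obtain ⟨f', rfl, hf⟩ := ihf ht.1
    obtain ⟨a', rfl, ha⟩ := iha ht.2
    exact ⟨Lam.app f' a', rfl, .app hf ha⟩
  | lam _ ihb =>
    cases t <;> simp only [Lam.lift, lam.injEq, reduceCtorEq] at ht
    obtain ⟨b', rfl, hb⟩ := ihb ht
    exact ⟨Lam.lam b', rfl, .lam hb⟩
  | beta _ _ ihb iha =>
    rcases t with _ | ⟨_ | _ | b, a⟩ | _ <;>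
      simp only [Lam.lift, app.injEq, lam.injEq, reduceCtorEq, false_and] at ht
    obtain ⟨b', rfl, hb⟩ := ihb ht.1
    obtain ⟨a', rfl, ha⟩ := iha ht.2
    exact ⟨subst 0 a' b', (lift_subst_of_le (Nat.zero_le d) _ _).symm, .beta hb ha⟩
  | eta _ ihu =>
    cases t <;> simp only [Lam.lift, lam.injEq, reduceCtorEq] at ht
    obtain ⟨g, rfl, rfl⟩ := exists_eta_of_lift_succ_eq_eta ht.symm
    obtain ⟨g', rfl, hg⟩ := ihu rfl
    exact ⟨g', rfl, .eta hg⟩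

end Par

def Normal : Lam → Prop
  | var _ => True
  | app f a => (∀ b, f ≠ lam b) ∧ Normal f ∧ Normal a
  | lam b => (∀ u, b ≠ app (lift 0 u) (var 0)) ∧ Normal b

theorem Par.eq_of_normal {t s : Lam} (h : Par t s) (ht : Normal t) : s = t := by
  induction h with
  | var n => rfl
  | app _ _ ihf iha => rw [ihf ht.2.1, iha ht.2.2]
  | lam _ ihb => rw [ihb ht.2]
  | beta => exact absurd rfl (ht.1 _)
  | eta => exact absurd rfl (ht.1 _)

def size : Lam → Nat
  | var _ => 1
  | app a b => size a + size b + 1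
  | lam a => size a + 1

theorem size_lift (d : Nat) (t : Lam) : size (lift d t) = size t := by
  induction t generalizing d <;> simp_all [lift, size]

open Classical in
/-- Complete development. An η-redex `λ. (lift 0 u) 0` is contracted to `dev u` before its body
is developed; this is what makes the triangle property `Par t s → Par s (dev t)` survive η. -/
noncomputable def dev : Lam → Lam
  | var n => var n
  | app (lam b) a => subst 0 (dev a) (dev b)
  | app f a => app (dev f) (dev a)
  | lam b => if h : ∃ u, b = app (lift 0 u) (var 0) then dev h.choose else lam (dev b)
termination_by t => size t
decreasing_by
  all_goals simp only [size]
  all_goals try omega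
  rw [congrArg size h.choose_spec, size, size, size_lift]
  omega

theorem dev_app_lam (b a : Lam) : dev (app (lam b) a) = subst 0 (dev a) (dev b) := dev.eq_2 b a

theorem dev_app_of_ne_lam {f : Lam} (hf : ∀ b, f ≠ lam b) (a : Lam) :
    dev (app f a) = app (dev f) (dev a) := dev.eq_3 f a hf

theorem dev_eta (u : Lam) : dev (lam (app (lift 0 u) (var 0))) = dev u := by
  have h : ∃ v, app (lift 0 u) (var 0) = app (lift 0 v) (var 0) := ⟨u, rfl⟩
  rw [dev.eq_4, dif_pos h, ← lift_injective 0 (app.inj h.choose_spec).1]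

theorem dev_lam_of_ne_eta {b : Lam} (hb : ∀ u, b ≠ app (lift 0 u) (var 0)) :
    dev (lam b) = lam (dev b) := by
  rw [dev.eq_4, dif_neg (not_exists.2 hb)]

theorem dev_lift (d : Nat) : ∀ t, dev (lift d t) = lift d (dev t)
  | var n => by simp only [lift, dev.eq_1]
  | app f a => by
    by_cases hf : ∃ b, f = lam b
    · obtain ⟨b, rfl⟩ := hf
      simp only [lift, dev_app_lam, dev_lift (d + 1) b, dev_lift d a,
        lift_subst_of_le (Nat.zero_le d)]
    · rw [lift, dev_app_of_ne_lam (lift_ne_lam (not_exists.1 hf) d),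
        dev_app_of_ne_lam (not_exists.1 hf), dev_lift d f, dev_lift d a, lift]
  | lam b => by
    by_cases hb : ∃ u, b = app (lift 0 u) (var 0)
    · obtain ⟨u, rfl⟩ := hb
      have : lift d (lam (app (lift 0 u) (var 0))) = lam (app (lift 0 (lift d u)) (var 0)) := by
        simp only [lift, lift_lift (Nat.zero_le d)]; rfl
      rw [this, dev_eta, dev_eta, dev_lift d u]
    · have hb' : ∀ u, lift (d + 1) b ≠ app (lift 0 u) (var 0) := fun u h =>
        hb ((exists_eta_of_lift_succ_eq_eta h).imp fun _ => And.left)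
      rw [lift, dev_lam_of_ne_eta hb', dev_lam_of_ne_eta (not_exists.1 hb), dev_lift (d + 1) b,
        lift]
termination_by t => size t
decreasing_by all_goals (subst_vars; simp only [size, size_lift]; omega)

theorem dev_app_eta (u a : Lam) : dev (app (lam (app (lift 0 u) (var 0))) a) = dev (app u a) := by
  rw [dev_app_lam]
  by_cases hu : ∃ N, u = lam N
  · obtain ⟨N, rfl⟩ := hu
    rw [lift, dev_app_lam, dev.eq_1, dev_lift, subst_var_lift_succ, dev_app_lam]
  · rw [dev_app_of_ne_lam (lift_ne_lam (not_exists.1 hu) 0), dev.eq_1, dev_lift,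
      dev_app_of_ne_lam (not_exists.1 hu)]
    simp [subst, subst_lift]

def Triangle (t : Lam) : Prop := ∀ s, Par t s → Par s (dev t)

/-- What the β-case of `Triangle (app t a)` needs to know about `t`: a parallel step may turn
`t` into an abstraction (by an η-step) and then contract the resulting β-redex. -/
def AppTriangle (t : Lam) : Prop := ∀ a, Triangle a → Triangle (app t a)

theorem triangle_var (n : Nat) : Triangle (var n) := by
  intro s hs
  cases hs
  rw [dev.eq_1]
  exact .var n

theorem appTriangle_of_ne_lam {f : Lam} (hf : ∀ b, f ≠ lam b) (h : Triangle f) :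
    AppTriangle f := by
  intro a ha s hs
  cases hs with
  | app hf' ha' => rw [dev_app_of_ne_lam hf]; exact .app (h _ hf') (ha _ ha')
  | beta => exact absurd rfl (hf _)

theorem appTriangle_lam {b : Lam} (hb : Triangle b)
    (heta : ∀ u, b = app (lift 0 u) (var 0) → AppTriangle u) : AppTriangle (lam b) := by
  intro a ha s hs
  cases hs with
  | app hf ha' =>
    cases hf with
    | lam hb' => rw [dev_app_lam]; exact .beta (hb _ hb') (ha _ ha')
    | eta hu => rw [dev_app_eta]; exact heta _ rfl a ha _ (.app hu ha')
  | beta hb' ha' => rw [dev_app_lam]; exact (hb _ hb').subst (ha _ ha') 0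

theorem triangle_eta {u : Lam} (hu : Triangle u) : Triangle (lam (app (lift 0 u) (var 0))) := by
  intro s hs
  rw [dev_eta]
  generalize hb : app (lift 0 u) (var 0) = b at hs
  cases hs with
  | eta hu' =>
    obtain rfl := lift_injective 0 (app.inj hb).1
    exact hu _ hu'
  | lam hb' =>
    cases hb' with
    | var => cases hb
    | lam => cases hb
    | app hg hv =>
      obtain ⟨rfl, rfl⟩ := app.inj hb
      cases hv
      obtain ⟨u', rfl, hu'⟩ := hg.of_lift rfl
      exact .eta (hu _ hu')
    | eta => cases hb
    | beta hM hv =>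
      obtain ⟨hlam, rfl⟩ := app.inj hb
      cases u <;> simp only [lift, lam.injEq, reduceCtorEq] at hlam
      obtain ⟨N', rfl, hN⟩ := hM.of_lift hlam.symm
      cases hv
      rw [subst_var_lift_succ]
      exact hu _ (.lam hN)

theorem triangle_lam {b : Lam} (hb : Triangle b)
    (heta : ∀ u, b = app (lift 0 u) (var 0) → Triangle u) : Triangle (lam b) := by
  by_cases hbe : ∃ u, b = app (lift 0 u) (var 0)
  · obtain ⟨u, rfl⟩ := hbe
    exact triangle_eta (heta u rfl)
  · intro s hs
    rw [dev_lam_of_ne_eta (not_exists.1 hbe)]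
    cases hs with
    | lam hb' => exact .lam (hb _ hb')
    | eta => exact absurd ⟨_, rfl⟩ hbe

theorem triangle_and_appTriangle : ∀ t, Triangle t ∧ AppTriangle t
  | var n => ⟨triangle_var n, appTriangle_of_ne_lam (by simp) (triangle_var n)⟩
  | app f a =>
    have h := (triangle_and_appTriangle f).2 a (triangle_and_appTriangle a).1
    ⟨h, appTriangle_of_ne_lam (by simp) h⟩
  | lam b =>
    have hb := (triangle_and_appTriangle b).1
    have heta : ∀ u, b = app (lift 0 u) (var 0) → Triangle u ∧ AppTriangle u :=
      fun u _ => triangle_and_appTriangle u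
    ⟨triangle_lam hb fun u h => (heta u h).1, appTriangle_lam hb fun u h => (heta u h).2⟩
termination_by t => size t
decreasing_by all_goals (subst_vars; simp only [size, size_lift]; omega)

theorem Par.triangle {t s : Lam} (h : Par t s) : Par s (dev t) :=
  (triangle_and_appTriangle t).1 s h

open Relation

theorem reflTransGen_par_app {f f' a a' : Lam} (hf : ReflTransGen Par f f')
    (ha : ReflTransGen Par a a') : ReflTransGen Par (app f a) (app f' a') :=
  (hf.lift (app · a) fun _ _ h => .app h (.refl a)).trans
    (ha.lift (app f') fun _ _ h => .app (.refl f') h)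

theorem reflTransGen_par_lam {b b' : Lam} (hb : ReflTransGen Par b b') :
    ReflTransGen Par (lam b) (lam b') :=
  hb.lift lam fun _ _ h => .lam h

theorem BetaEta.join {t s : Lam} (h : BetaEta t s) : Join (ReflTransGen Par) t s := by
  have hequiv : Equivalence (Join (ReflTransGen Par)) :=
    equivalence_join_reflTransGen fun a _ _ hab hac =>
      ⟨dev a, .single hab.triangle, .single hac.triangle⟩
  induction h with
  | beta t s => exact ⟨_, .single (.beta (.refl t) (.refl s)), .refl⟩
  | eta t => exact ⟨_, .single (.eta (.refl t)), .refl⟩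
  | refl t => exact hequiv.refl t
  | symm _ ih => exact hequiv.symm ih
  | trans _ _ ih₁ ih₂ => exact hequiv.trans ih₁ ih₂
  | congApp _ _ ihf iha =>
    obtain ⟨f, hf₁, hf₂⟩ := ihf
    obtain ⟨a, ha₁, ha₂⟩ := iha
    exact ⟨app f a, reflTransGen_par_app hf₁ ha₁, reflTransGen_par_app hf₂ ha₂⟩
  | congLam _ ih =>
    obtain ⟨b, hb₁, hb₂⟩ := ih
    exact ⟨lam b, reflTransGen_par_lam hb₁, reflTransGen_par_lam hb₂⟩

theorem Normal.eq_of_reflTransGen_par {t s : Lam} (ht : Normal t) (h : ReflTransGen Par t s) :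
    s = t := by
  induction h with
  | refl => rfl
  | tail _ hstep ih => subst ih; exact hstep.eq_of_normal ht

theorem BetaEta.eq_of_normal {t s : Lam} (h : BetaEta t s) (ht : Normal t) (hs : Normal s) :
    t = s := by
  obtain ⟨v, htv, hsv⟩ := h.join
  rw [← ht.eq_of_reflTransGen_par htv, hs.eq_of_reflTransGen_par hsv]

instance : Trans BetaEta BetaEta BetaEta := ⟨BetaEta.trans⟩

/-- `Onf n` is `λx. xⁿ W` with `W = λy. y (x y)`; inside `W` the outer `x` is index `1`. -/
def W : Lam := lam (app (var 0) (app (var 1) (var 0)))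

def Onf (n : Nat) : Lam := lam (npow (var 0) n W)

theorem lift_npow (d : Nat) (e a : Lam) (k : Nat) :
    lift d (npow e k a) = npow (lift d e) k (lift d a) := by
  induction k with
  | zero => rfl
  | succ k ih => simp only [npow, lift, ih]

theorem subst_npow (d : Nat) (s e a : Lam) (k : Nat) :
    subst d s (npow e k a) = npow (subst d s e) k (subst d s a) := by
  induction k with
  | zero => rfl
  | succ k ih => simp only [npow, subst, ih]

theorem lift_Onf (n : Nat) : lift 0 (Onf n) = Onf n := by
  rw [Onf, lift, lift_npow]
  rfl

theorem O_app_Onf (n : Nat) : BetaEta (app O (Onf n)) (Onf (n + 1)) := by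
  have hO := BetaEta.beta W (Onf n)
  have hbody := BetaEta.beta (npow (var 0) n W) (var 0)
  rw [subst_npow] at hbody
  simp only [W, subst, lift_Onf] at hO
  exact hO.trans (.congLam (.congApp (.refl _) hbody))

theorem BetaEta.npow_right {a a' : Lam} (h : BetaEta a a') (e : Lam) :
    ∀ k, BetaEta (npow e k a) (npow e k a')
  | 0 => h
  | k + 1 => .congApp (.refl e) (h.npow_right e k)

theorem Onf_app_O (n : Nat) : BetaEta (app (Onf n) O) (npow O n (Onf 1)) := by
  have hOnf := BetaEta.beta (npow (var 0) n W) O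
  have hO := BetaEta.beta W (var 0)
  rw [subst_npow] at hOnf
  exact hOnf.trans (BetaEta.npow_right (.congLam (.congApp (.refl (var 0)) hO)) O n)

theorem npow_O_Onf (n : Nat) : ∀ k, BetaEta (npow O k (Onf n)) (Onf (n + k))
  | 0 => .refl _
  | k + 1 => (BetaEta.congApp (.refl O) (npow_O_Onf n k)).trans (O_app_Onf (n + k))

theorem sapp_O_betaEta_Onf : ∀ n, BetaEta (sapp O (n + 1)) (Onf n)
  | 0 => .refl O
  | n + 1 =>
    calc BetaEta (app (sapp O (n + 1)) O) (app (Onf n) O) :=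
          .congApp (sapp_O_betaEta_Onf n) (.refl O)
      BetaEta _ (npow O n (Onf 1)) := Onf_app_O n
      BetaEta _ (Onf (n + 1)) := by rw [Nat.add_comm n 1]; exact npow_O_Onf 1 n

theorem normal_npow_var_W (k : Nat) : Normal (npow (var 0) k W) := by
  induction k with
  | zero => simp [npow, W, Normal]
  | succ k ih => exact ⟨by simp, trivial, ih⟩

theorem normal_Onf (n : Nat) : Normal (Onf n) := by
  refine ⟨fun u h => ?_, normal_npow_var_W n⟩
  cases n with
  | zero => cases h
  | succ n => cases u <;> simp [npow, lift] at h

theorem Onf_injective : Function.Injective Onf := by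
  intro a b h
  simp only [Onf, lam.injEq] at h
  induction a generalizing b with
  | zero => cases b <;> simp_all [npow, W]
  | succ a ih =>
    cases b with
    | zero => simp [npow, W] at h
    | succ b => simp only [npow, app.injEq] at h; rw [ih h.2]

theorem O_no_rho :
    (∀ n : Nat,
      BetaEta (sapp O (n + 1))
        (lam (npow (var 0) n (lam (app (var 0) (app (var 1) (var 0))))))) ∧
    (∀ i j : Nat, 1 ≤ i → 1 ≤ j → ¬ BetaEta (sapp O i) (sapp O (i + j))) := by
  refine ⟨sapp_O_betaEta_Onf, fun i j hi hj h => ?_⟩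
  obtain ⟨n, rfl⟩ := Nat.exists_eq_add_of_le' hi
  have hnf : BetaEta (Onf n) (Onf (n + j)) := by
    have := sapp_O_betaEta_Onf (n + j)
    rw [Nat.add_right_comm] at this
    exact ((sapp_O_betaEta_Onf n).symm.trans h).trans this
  have := Onf_injective (hnf.eq_of_normal (normal_Onf n) (normal_Onf (n + j)))
  omega

end Lam
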